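/- Let H be a separable real Hilbert space, let K be a nonempty subset of ℕ, and let (e_k)_{k∈K} be an orthonormal basis of H. For every k ∈ K, let β_k > 0 and let φ_k : ℝ → ℝ be a differentiable convex function such that φ_k ≥ φ_k(0) = 0 and φ_k' is β_k-Lipschitzian. Suppose that sup_{k∈K} β_k < +∞ and define h(x) = Σ_{k∈K} φ_k(⟨x, e_k⟩) for every x ∈ H. Then for every γ > 0 and every x ∈ H, prox_{γh} x = Σ_{k∈K} (prox_{γφ_k} ⟨x, e_k⟩) e_k. -/

import Mathlib

/-!
Put `sₖ = ⟪x, eₖ⟫` and `qₖ = prox_{γφₖ} sₖ`. Since `φₖ` is minimal at `0`, `|qₖ| ≤ 2|sₖ|`, so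
`q = ∑ qₖ eₖ` exists. Each one-dimensional prox objective is strongly convex, whence
`γφₖ(qₖ) + (sₖ - qₖ)²/2 + (t - qₖ)²/4 ≤ γφₖ(t) + (sₖ - t)²/2` for all `t`. Taking `t = ⟪p, eₖ⟫`
and summing with Parseval gives `γh(q) + ‖x - q‖²/2 + ‖p - q‖²/4 ≤ γh(p) + ‖x - p‖²/2`, while
minimality of `p` gives the reverse inequality without the `‖p - q‖²` term; hence `p = q`.
All the series converge because the Lipschitz bound on `φₖ'` gives `φₖ(t) ≤ (sup β) t²`.
-/

open Set

def IsProx {E : Type*} [NormedAddCommGroup E] (f : E → ℝ) (x p : E) : Prop :=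
  ∀ y, f p + ‖x - p‖ ^ 2 / 2 ≤ f y + ‖x - y‖ ^ 2 / 2

section Prox

variable {E : Type*} [NormedAddCommGroup E] {f : E → ℝ} {x p : E}

theorem IsProx.norm_sq_le (hf : ∀ y, f 0 ≤ f y) (hp : IsProx f x p) : ‖p‖ ^ 2 ≤ 4 * ‖x‖ ^ 2 := by
  have h0 := hp 0
  have hfp := hf p
  have htri : ‖p‖ ≤ ‖x‖ + ‖x - p‖ := by
    simpa using norm_sub_le x (x - p)
  rw [sub_zero] at h0
  have hxp : ‖x - p‖ ≤ ‖x‖ :=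
    (pow_le_pow_iff_left₀ (norm_nonneg _) (norm_nonneg _) two_ne_zero).1 (by linarith)
  nlinarith [norm_nonneg p]

/-- The objective of the prox problem is `1`-strongly convex; comparing with the midpoint of `p`
and `y` already gives a quarter of the quadratic growth. -/
theorem ConvexOn.isProx_add_sq_le [InnerProductSpace ℝ E] (hf : ConvexOn ℝ univ f)
    (hp : IsProx f x p) (y : E) :
    f p + ‖x - p‖ ^ 2 / 2 + ‖y - p‖ ^ 2 / 4 ≤ f y + ‖x - y‖ ^ 2 / 2 := by
  have hmid : f ((1 / 2 : ℝ) • p + (1 / 2 : ℝ) • y) ≤ (1 / 2 : ℝ) • f p + (1 / 2 : ℝ) • f y :=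
    hf.2 (mem_univ p) (mem_univ y) (by norm_num) (by norm_num) (by norm_num)
  have hpar := parallelogram_law_with_norm ℝ (x - p) (x - y)
  have hxm : x - ((1 / 2 : ℝ) • p + (1 / 2 : ℝ) • y) = (1 / 2 : ℝ) • ((x - p) + (x - y)) := by
    module
  have hyp : (x - p) - (x - y) = y - p := by abel
  have := hp ((1 / 2 : ℝ) • p + (1 / 2 : ℝ) • y)
  rw [hxm, norm_smul, mul_pow] at this
  rw [hyp] at hpar
  simp only [smul_eq_mul] at hmid
  norm_num at this
  nlinarith

end Prox

theorem ConvexOn.add_mul_sub_le_of_hasDerivAt {f : ℝ → ℝ} {f' x : ℝ} (hf : ConvexOn ℝ univ f)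
    (hd : HasDerivAt f f' x) (y : ℝ) : f x + f' * (y - x) ≤ f y := by
  rcases lt_trichotomy x y with hxy | rfl | hyx
  · have := hf.le_slope_of_hasDerivAt (mem_univ x) (mem_univ y) hxy hd
    rw [slope_def_field, le_div_iff₀ (sub_pos.2 hxy)] at this
    linarith
  · simp
  · have := hf.slope_le_of_hasDerivAt (mem_univ y) (mem_univ x) hyx hd
    rw [slope_def_field, div_le_iff₀ (sub_pos.2 hyx)] at this
    linarith

theorem ConvexOn.le_add_mul_sq {f f' : ℝ → ℝ} {K : NNReal} (hf : ConvexOn ℝ univ f)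
    (hmin : ∀ t, f 0 ≤ f t) (hd : ∀ t, HasDerivAt f (f' t) t) (hlip : LipschitzWith K f')
    (t : ℝ) : f t ≤ f 0 + K * t ^ 2 := by
  have hf'0 : f' 0 = 0 := IsLocalMin.hasDerivAt_eq_zero (.of_forall hmin) (hd 0)
  have hgrad := hf.add_mul_sub_le_of_hasDerivAt (hd t) 0
  have hlip_t : |f' t| ≤ K * |t| := by
    simpa [Real.dist_eq, hf'0] using hlip.dist_le_mul t 0
  have : f' t * t ≤ K * t ^ 2 := by
    calc f' t * t ≤ |f' t| * |t| := by rw [← abs_mul]; exact le_abs_self _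
      _ ≤ K * |t| * |t| := by gcongr
      _ = K * t ^ 2 := by rw [mul_assoc, ← sq, sq_abs]
  linarith

namespace HilbertBasis

variable {ι H : Type*} [NormedAddCommGroup H] [InnerProductSpace ℝ H] (e : HilbertBasis ι ℝ H)

theorem hasSum_inner_sq (y : H) : HasSum (fun i => inner ℝ y (e i) ^ 2) (‖y‖ ^ 2) := by
  simpa only [sq, real_inner_comm (e _) y, real_inner_self_eq_norm_sq]
    using e.hasSum_inner_mul_inner y y

theorem summable_of_le_mul_inner_sq {f : ι → ℝ} {C : ℝ} {y : H} (hf0 : ∀ i, 0 ≤ f i)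
    (hf : ∀ i, f i ≤ C * inner ℝ y (e i) ^ 2) : Summable f :=
  .of_nonneg_of_le hf0 hf ((e.hasSum_inner_sq y).summable.mul_left C)

theorem exists_hasSum_smul {c : ι → ℝ} (hc : Summable fun i => c i ^ 2) :
    ∃ q, HasSum (fun i => c i • e i) q ∧ ∀ i, inner ℝ q (e i) = c i := by
  have hmem : Memℓp c 2 := memℓp_gen (by simpa using hc)
  refine ⟨e.repr.symm ⟨c, hmem⟩, e.hasSum_repr_symm _, fun i => ?_⟩
  rw [real_inner_comm, ← e.repr_apply_apply, LinearIsometryEquiv.apply_symm_apply]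

theorem eq_of_isProx_sum_comp_inner {g : ι → ℝ → ℝ} (hg : ∀ i, ConvexOn ℝ univ (g i))
    {x p q : H} (hsum_p : Summable fun i => g i (inner ℝ p (e i)))
    (hsum_q : Summable fun i => g i (inner ℝ q (e i)))
    (hq : ∀ i, IsProx (g i) (inner ℝ x (e i)) (inner ℝ q (e i)))
    (hp : IsProx (fun y => ∑' i, g i (inner ℝ y (e i))) x p) : p = q := by
  have hcoord : ∀ i, g i (inner ℝ q (e i)) + (inner ℝ (x - q) (e i)) ^ 2 / 2
      + (inner ℝ (p - q) (e i)) ^ 2 / 4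
      ≤ g i (inner ℝ p (e i)) + (inner ℝ (x - p) (e i)) ^ 2 / 2 := by
    intro i
    simpa only [inner_sub_left, Real.norm_eq_abs, sq_abs]
      using (hg i).isProx_add_sq_le (hq i) (inner ℝ p (e i))
  have hsum_le := hasSum_le hcoord
    ((hsum_q.hasSum.add ((e.hasSum_inner_sq _).div_const 2)).add
      ((e.hasSum_inner_sq _).div_const 4))
    (hsum_p.hasSum.add ((e.hasSum_inner_sq _).div_const 2))
  have hpq : ‖p - q‖ ^ 2 ≤ 0 := by linarith [hp q]
  rw [← sub_eq_zero, ← norm_eq_zero]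
  exact pow_eq_zero_iff two_ne_zero |>.1 (le_antisymm hpq (by positivity))

end HilbertBasis

theorem stmt_16_general {H : Type*} [NormedAddCommGroup H] [InnerProductSpace ℝ H]
    (K : Set ℕ)
    (e : HilbertBasis K ℝ H)
    (βk : K → ℝ) (hbdd : BddAbove (Set.range βk))
    (φ : K → ℝ → ℝ) (hconv : ∀ k, ConvexOn ℝ Set.univ (φ k))
    (hφ0 : ∀ k, φ k 0 = 0) (hφnn : ∀ k t, φ k 0 ≤ φ k t)
    (φ' : K → ℝ → ℝ) (hderiv : ∀ k t, HasDerivAt (φ k) (φ' k t) t)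
    (hlip : ∀ k, LipschitzWith (Real.toNNReal (βk k)) (φ' k))
    (h : H → ℝ)
    (hdef : ∀ x, h x = ∑' k : K, φ k (inner ℝ x (e k)))
    (γ : ℝ) (hγ : 0 < γ)
    -- `P k s = prox_{γ φ k} s` for every `k ∈ K`, `s ∈ ℝ` :
    (P : K → ℝ → ℝ)
    (hP : ∀ k, ∀ s t : ℝ, γ * φ k (P k s) + (s - P k s) ^ 2 / 2
      ≤ γ * φ k t + (s - t) ^ 2 / 2)
    (x : H)
    -- `p = prox_{γh} x` :
    (p : H)
    (hp : ∀ y : H, γ * h p + ‖x - p‖ ^ 2 / 2 ≤ γ * h y + ‖x - y‖ ^ 2 / 2) :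
    p = ∑' k : K, P k (inner ℝ x (e k)) • e k := by
  obtain ⟨B, hB⟩ := hbdd
  have hφ_nonneg : ∀ k t, 0 ≤ γ * φ k t := fun k t => by
    have := hφnn k t; rw [hφ0] at this; positivity
  have hφ_le : ∀ k t, γ * φ k t ≤ γ * B.toNNReal * t ^ 2 := fun k t => by
    have hβB : (βk k).toNNReal ≤ B.toNNReal := Real.toNNReal_mono (hB ⟨k, rfl⟩)
    have := (hconv k).le_add_mul_sq (hφnn k) (hderiv k) (hlip k) t
    rw [hφ0, zero_add] at this
    rw [mul_assoc]
    gcongr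
    exact this.trans (by gcongr)
  have hsum : ∀ y : H, Summable fun k => γ * φ k (inner ℝ y (e k)) := fun y =>
    e.summable_of_le_mul_inner_sq (fun k => hφ_nonneg k _) (fun k => hφ_le k _)
  have hprox : ∀ k s, IsProx (fun t => γ * φ k t) s (P k s) := fun k s t => by
    simpa only [Real.norm_eq_abs, sq_abs] using hP k s t
  obtain ⟨q, hq, hq_coord⟩ := e.exists_hasSum_smul (c := fun k => P k (inner ℝ x (e k)))
    (e.summable_of_le_mul_inner_sq (fun k => sq_nonneg _) fun k => by
      simpa only [Real.norm_eq_abs, sq_abs]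
        using (hprox k _).norm_sq_le fun t => by gcongr; exact hφnn k t)
  rw [hq.tsum_eq]
  refine e.eq_of_isProx_sum_comp_inner (fun k => (hconv k).smul hγ.le) (hsum p) (hsum q)
    (fun k => hq_coord k ▸ hprox k _) fun y => ?_
  simpa only [smul_eq_mul, tsum_mul_left, ← hdef] using hp y

/-- In the setting of Statement 15 (`h x = ∑_{k ∈ K} φ k ⟨x, e k⟩`
expanded in an orthonormal basis `(e k)_{k ∈ K}`), for every `γ > 0` and every `x ∈ H`,
`prox_{γh} x = ∑_{k ∈ K} (prox_{γ φ k} ⟨x, e k⟩) • e k`. -/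
theorem stmt_16 {H : Type*} [NormedAddCommGroup H] [InnerProductSpace ℝ H] [CompleteSpace H]
    (K : Set ℕ) (hK : K.Nonempty)
    (e : HilbertBasis K ℝ H)
    (βk : K → ℝ) (hβk : ∀ k, 0 < βk k) (hbdd : BddAbove (Set.range βk))
    (φ : K → ℝ → ℝ) (hconv : ∀ k, ConvexOn ℝ Set.univ (φ k))
    (hφ0 : ∀ k, φ k 0 = 0) (hφnn : ∀ k t, φ k 0 ≤ φ k t)
    (φ' : K → ℝ → ℝ) (hderiv : ∀ k t, HasDerivAt (φ k) (φ' k t) t)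
    (hlip : ∀ k, LipschitzWith (Real.toNNReal (βk k)) (φ' k))
    (h : H → ℝ)
    (hdef : ∀ x, h x = ∑' k : K, φ k (inner ℝ x (e k)))
    (γ : ℝ) (hγ : 0 < γ)
    -- `P k s = prox_{γ φ k} s` for every `k ∈ K`, `s ∈ ℝ` :
    (P : K → ℝ → ℝ)
    (hP : ∀ k, ∀ s t : ℝ, γ * φ k (P k s) + (s - P k s) ^ 2 / 2
      ≤ γ * φ k t + (s - t) ^ 2 / 2)
    (x : H)
    -- `p = prox_{γh} x` :
    (p : H)
    (hp : ∀ y : H, γ * h p + ‖x - p‖ ^ 2 / 2 ≤ γ * h y + ‖x - y‖ ^ 2 / 2) :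
    p = ∑' k : K, P k (inner ℝ x (e k)) • e k :=
  stmt_16_general K e βk hbdd φ hconv hφ0 hφnn φ' hderiv hlip h hdef γ hγ P hP x p hp
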